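/- Let n ≥ 1 and suppose r(x) ≠ 0 for all x ∈ ℝ. Then the coefficient Kₙ¹ vanishes identically on ℝ if and only if s = −((n−1)/2)·r' on ℝ. -/

import Mathlib

noncomputable def Psi (r s : ℝ → ℝ) (y : ℝ → ℝ) : ℝ → ℝ :=
  fun x => r x * deriv y x + s x * y x

noncomputable def PsiIter (r s : ℝ → ℝ) : ℕ → (ℝ → ℝ) → (ℝ → ℝ)
  | 0, y => y
  | n + 1, y => PsiIter r s n (Psi r s y)

noncomputable def Kcoef (r s : ℝ → ℝ) : ℕ → ℤ → (ℝ → ℝ)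
  | 0, j => if j = 0 then 1 else 0
  | n + 1, j =>
      if j < 0 ∨ (n + 1 : ℤ) < j then 0
      else fun x => r x * Kcoef r s n j x + Psi r s (Kcoef r s n (j - 1)) x

lemma Kcoef_neg_one (r s : ℝ → ℝ) (n : ℕ) : Kcoef r s n (-1) = fun _ => (0:ℝ) := by
  cases n with
  | zero => simp [Kcoef]; rfl
  | succ m => simp [Kcoef]; rfl

lemma Kcoef_zero (r s : ℝ → ℝ) (n : ℕ) : Kcoef r s n 0 = fun x => r x ^ n := by
  induction n with
  | zero => simp [Kcoef]; rfl
  | succ m ih =>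
      funext x
      have h1 : ¬ ((0:ℤ) < 0 ∨ (m + 1 : ℤ) < 0) := by omega
      simp only [Kcoef, h1, if_false]
      have : (0:ℤ) - 1 = -1 := by ring
      rw [this, ih, Kcoef_neg_one]
      simp [Psi, pow_succ]
      ring

lemma Kcoef_one (r s : ℝ → ℝ) (hr : ContDiff ℝ (⊤ : ℕ∞) r) (n : ℕ) (hn : 1 ≤ n) :
    ∀ x, Kcoef r s n 1 x = (n : ℝ) * r x ^ (n - 1) *
      (s x + (((n : ℝ) - 1) / 2) * deriv r x) := by
  induction n, hn using Nat.le_induction with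
  | base =>
      intro x
      norm_num [Kcoef, Psi]
  | succ m hm ih =>
      intro x
      have h1 : ¬ ((1:ℤ) < 0 ∨ (m + 1 : ℤ) < 1) := by omega
      simp only [Kcoef, h1, if_false]
      have h2 : (1:ℤ) - 1 = 0 := by ring
      rw [h2, ih x, Kcoef_zero]
      have hdr : DifferentiableAt ℝ r x := hr.differentiable (by simp) x
      simp only [Psi]
      rw [deriv_fun_pow hdr m]
      obtain ⟨k, rfl⟩ := Nat.exists_eq_add_of_le hm
      have e1 : 1 + k - 1 = k := by omega
      have e2 : 1 + k + 1 - 1 = 1 + k := by omega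
      rw [e1, e2]
      have e3 : r x ^ (1 + k) = r x ^ k * r x := by rw [add_comm, pow_succ]
      rw [e3]
      push_cast
      ring

/-- For n ≥ 1 and r nonvanishing, Kₙ¹ ≡ 0 iff s = −((n−1)/2)·r'. -/
theorem K_n_1_vanishes_iff (r s : ℝ → ℝ)
    (hr : ContDiff ℝ (⊤ : ℕ∞) r) (hs : ContDiff ℝ (⊤ : ℕ∞) s)
    (hr0 : ∀ x : ℝ, r x ≠ 0)
    (n : ℕ) (hn : 1 ≤ n) :
    (∀ x : ℝ, Kcoef r s n 1 x = 0) ↔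
      (∀ x : ℝ, s x = -(((n : ℝ) - 1) / 2) * deriv r x) := by
  constructor
  · intro H x
    have h := H x
    rw [Kcoef_one r s hr n hn x] at h
    have hn0 : (n : ℝ) ≠ 0 := by positivity
    have hrp : r x ^ (n - 1) ≠ 0 := pow_ne_zero _ (hr0 x)
    have := mul_eq_zero.mp h
    rcases this with h' | h'
    · exact absurd (mul_eq_zero.mp h') (by push_neg; exact ⟨hn0, hrp⟩)
    · linarith [h']
  · intro H x
    rw [Kcoef_one r s hr n hn x, H x]
    ring
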